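/- Let G be a finitely generated group of orientation-preserving homeomorphisms of [0,1], each of which restricts to a real-analytic function on (0,1), and suppose no point of (0,1) is fixed by every element of G. Let z ∈ (0,1), and let I₀ = (p, q) be a connected component of (0,1) ∖ closure(O(z)) with p, q ∈ (0,1). Suppose x ∈ I₀ is such that O(x) ∩ I₀ is an infinite subset of I₀ whose set of accumulation points is exactly {p, q}. Then for every y ∈ I₀ ∖ O(x) and every connected component J of I₀ ∖ O(x), the set O(y) ∩ J contains exactly one point; in particular, every orbit meeting I₀ and distinct from O(x) is parallel to O(x) in I₀. -/

import Mathlib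

/-!
Elements of `G` that move a point of the gap `(p, q)` of the closed invariant set
`closure (O z)` into the gap fix `p` and `q`, so inside the gap the `G`-orbits are the orbits of
the stabilizer `H` of the gap. The set `S = O(x) ∩ (p, q)` accumulates only at `p` and `q`, hence is
discrete in `(p, q)` and unbounded towards both ends, and the components of `(p, q) ∖ S` are the
gaps between consecutive points of `S`. An element of `H` with a fixed point in `(p, q)` permutes
the finitely many points of `S` between that point and any other point of `S`, so it fixes `S`;
since `S` accumulates at `p ∈ (0, 1)`, analyticity forces it to be the identity on `(0, 1)`. Hence `H`
acts freely on `(p, q)`, permuting the gaps of `S` simply transitively, which gives one point of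
`O(y)` in each gap.
-/

open Set Topology Filter

/-- Orientation-preserving homeomorphisms of `[0,1]`, i.e. increasing homeomorphisms of
`[0,1]` onto itself, are exactly the order isomorphisms of the unit interval
(an increasing bijection of `[0,1]` is automatically a homeomorphism). -/
abbrev IntervalHomeo := unitInterval ≃o unitInterval

/-- The `G`-orbit of a point `x`. -/
def orbit (G : Subgroup IntervalHomeo) (x : unitInterval) : Set unitInterval :=
  {y | ∃ g ∈ G, g x = y}

/-- A set `M` is `G`-invariant if `g(M) = M` for every `g ∈ G`. -/
def Invariant (G : Subgroup IntervalHomeo) (M : Set unitInterval) : Prop :=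
  ∀ g ∈ G, ⇑(g : IntervalHomeo) '' M = M

/-- The open interval `(0,1)` inside `[0,1]`. -/
def openI : Set unitInterval := {x | (x : ℝ) ∈ Set.Ioo (0 : ℝ) 1}

/-- `M` is contained in `S` and closed in the subspace topology of `S`. -/
def ClosedIn (S M : Set unitInterval) : Prop := M ⊆ S ∧ closure M ∩ S ⊆ M

section LinearOrder

variable {α : Type*} [LinearOrder α]

def IsGap (S : Set α) (a b : α) : Prop := a ∈ S ∧ b ∈ S ∧ a < b ∧ Disjoint (Ioo a b) S

theorem IsGap.left_eq {S : Set α} {a b a' b' u : α} (h : IsGap S a b) (h' : IsGap S a' b')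
    (hu : u ∈ Ioo a b) (hu' : u ∈ Ioo a' b') : a = a' := by
  by_contra hne
  rcases lt_or_gt_of_ne hne with hlt | hlt
  · exact disjoint_left.mp h.2.2.2 ⟨hlt, hu'.1.trans hu.2⟩ h'.1
  · exact disjoint_left.mp h'.2.2.2 ⟨hlt, hu.1.trans hu'.2⟩ h.1

theorem IsGap.right_eq {S : Set α} {a b b' : α} (h : IsGap S a b) (h' : IsGap S a b') :
    b = b' := by
  by_contra hne
  rcases lt_or_gt_of_ne hne with hlt | hlt
  · exact disjoint_left.mp h'.2.2.2 ⟨h.2.2.1, hlt⟩ h.2.1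
  · exact disjoint_left.mp h.2.2.2 ⟨h'.2.2.1, hlt⟩ h'.2.1

theorem IsGap.image {S : Set α} {a b : α} (h : IsGap S a b) (g : α ≃o α) (hg : g '' S = S) :
    IsGap S (g a) (g b) := by
  obtain ⟨ha, hb, hlt, hab⟩ := h
  refine ⟨hg ▸ mem_image_of_mem g ha, hg ▸ mem_image_of_mem g hb, g.strictMono hlt, ?_⟩
  rwa [← g.image_Ioo, ← hg, disjoint_image_iff g.injective]

theorem exists_isGap_mem_Ioo {S : Set α} {s₀ s₁ w : α} (hs₀ : s₀ ∈ S) (hs₁ : s₁ ∈ S)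
    (hw : w ∈ Ioo s₀ s₁) (hwS : w ∉ S) (hfin : (S ∩ Icc s₀ s₁).Finite) :
    ∃ a b, IsGap S a b ∧ w ∈ Ioo a b := by
  obtain ⟨a, ⟨haS, has₀, haw⟩, hamax⟩ := exists_max_image (S ∩ Icc s₀ w) id
    (hfin.subset (inter_subset_inter_right _ (Icc_subset_Icc_right hw.2.le)))
    ⟨s₀, hs₀, le_rfl, hw.1.le⟩
  obtain ⟨b, ⟨hbS, hwb, hbs₁⟩, hbmin⟩ := exists_min_image (S ∩ Icc w s₁) id
    (hfin.subset (inter_subset_inter_right _ (Icc_subset_Icc_left hw.1.le)))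
    ⟨s₁, hs₁, hw.2.le, le_rfl⟩
  have haw' : a < w := haw.lt_of_ne (ne_of_mem_of_not_mem haS hwS)
  have hwb' : w < b := hwb.lt_of_ne (ne_of_mem_of_not_mem hbS hwS).symm
  refine ⟨a, b, ⟨haS, hbS, haw'.trans hwb', disjoint_left.mpr fun u hu huS => ?_⟩, haw', hwb'⟩
  rcases le_total u w with huw | hwu
  · exact not_lt_of_ge (hamax u ⟨huS, has₀.trans hu.1.le, huw⟩) hu.1
  · exact not_lt_of_ge (hbmin u ⟨huS, hwu, hu.2.le.trans hbs₁⟩) hu.2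

theorem OrderIso.apply_eq_of_mapsTo_of_finite {g : α ≃o α} {T : Set α} (hT : T.Finite)
    (hg : MapsTo g T T) {s : α} (hs : s ∈ T) : g s = s := by
  have : Finite T := hT.to_subtype
  have hmono : StrictMono (hg.restrict g T T) := fun _ _ h => g.strictMono h
  exact congrArg Subtype.val (le_antisymm (hmono.dual.le_apply (x := OrderDual.toDual ⟨s, hs⟩))
    (hmono.le_apply (x := ⟨s, hs⟩)))

theorem OrderIso.apply_eq_of_finite_inter_Icc {g : α ≃o α} {S : Set α} (hg : MapsTo g S S)
    {a b : α} (ha : a ≤ g a) (hb : g b ≤ b) (hfin : (S ∩ Icc a b).Finite) {s : α}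
    (hs : s ∈ S ∩ Icc a b) : g s = s :=
  g.apply_eq_of_mapsTo_of_finite hfin
    (hg.inter_inter (g.monotone.mapsTo_Icc.mono_right (Icc_subset_Icc ha hb))) hs

/-- One of `g`, `g⁻¹` maps the finite set `S ∩ [s, t]` into itself, and a strictly monotone
self-map of a finite linear order is the identity. -/
theorem OrderIso.apply_eq_of_finite_inter_uIcc {g : α ≃o α} {S : Set α} (hg : MapsTo g S S)
    (hg' : MapsTo g.symm S S) {s t : α} (hs : s ∈ S) (ht : g t = t)
    (hfin : (S ∩ uIcc s t).Finite) : g s = s := by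
  have ht' : g.symm t = t := g.symm_apply_eq.mpr ht.symm
  suffices g s = s ∨ g.symm s = s by
    rcases this with h | h
    exacts [h, (g.symm_apply_eq.mp h).symm]
  rcases le_total s t with hst | hts
  · rw [uIcc_of_le hst] at hfin
    rcases le_total s (g s) with h | h
    · exact .inl (g.apply_eq_of_finite_inter_Icc hg h ht.le hfin ⟨hs, le_rfl, hst⟩)
    · exact .inr (g.symm.apply_eq_of_finite_inter_Icc hg' (g.le_symm_apply.mpr h) ht'.le hfin
        ⟨hs, le_rfl, hst⟩)
  · rw [uIcc_of_ge hts] at hfin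
    rcases le_total s (g s) with h | h
    · exact .inr (g.symm.apply_eq_of_finite_inter_Icc hg' ht'.ge (g.symm_apply_le.mpr h) hfin
        ⟨hs, hts, le_rfl⟩)
    · exact .inl (g.apply_eq_of_finite_inter_Icc hg ht.ge h hfin ⟨hs, hts, le_rfl⟩)

theorem OrderIso.apply_le_and_le_apply_of_disjoint {g : α ≃o α} {Λ : Set α} (hΛ : MapsTo g Λ Λ)
    {p q t : α} (hp : p ∈ Λ) (hq : q ∈ Λ) (hgap : Disjoint (Ioo p q) Λ) (ht : t ∈ Ioo p q)
    (hgt : g t ∈ Ioo p q) : g p ≤ p ∧ q ≤ g q := by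
  constructor
  · by_contra! h
    exact disjoint_left.mp hgap ⟨h, (g.strictMono ht.1).trans hgt.2⟩ (hΛ hp)
  · by_contra! h
    exact disjoint_left.mp hgap ⟨hgt.1.trans (g.strictMono ht.2), h⟩ (hΛ hq)

theorem OrderIso.apply_eq_of_disjoint {g : α ≃o α} {Λ : Set α} (hΛ : MapsTo g Λ Λ)
    (hΛ' : MapsTo g.symm Λ Λ) {p q t : α} (hp : p ∈ Λ) (hq : q ∈ Λ)
    (hgap : Disjoint (Ioo p q) Λ) (ht : t ∈ Ioo p q) (hgt : g t ∈ Ioo p q) :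
    g p = p ∧ g q = q := by
  obtain ⟨hgp, hgq⟩ := g.apply_le_and_le_apply_of_disjoint hΛ hp hq hgap ht hgt
  obtain ⟨hgp', hgq'⟩ := g.symm.apply_le_and_le_apply_of_disjoint hΛ' hp hq hgap hgt
    (by rwa [g.symm_apply_apply])
  exact ⟨le_antisymm hgp (g.symm_apply_le.mp hgp'), le_antisymm (g.le_symm_apply.mp hgq') hgq⟩

theorem AccPt.exists_mem_lt [TopologicalSpace α] [OrderTopology α] {S : Set α} {p w : α}
    (h : AccPt p (𝓟 S)) (hpw : p < w) : ∃ s ∈ S, s < w := by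
  obtain ⟨s, hs, -⟩ := accPt_iff_nhds.mp h (Iio w) (isOpen_Iio.mem_nhds hpw)
  exact ⟨s, hs.2, hs.1⟩

theorem AccPt.exists_mem_gt [TopologicalSpace α] [OrderTopology α] {S : Set α} {q w : α}
    (h : AccPt q (𝓟 S)) (hwq : w < q) : ∃ s ∈ S, w < s := by
  obtain ⟨s, hs, -⟩ := accPt_iff_nhds.mp h (Ioi w) (isOpen_Ioi.mem_nhds hwq)
  exact ⟨s, hs.2, hs.1⟩

end LinearOrder

theorem IsCompact.finite_inter_of_forall_not_accPt {X : Type*} [TopologicalSpace X]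
    {S K : Set X} (hK : IsCompact K) (h : ∀ c ∈ K, ¬AccPt c (𝓟 S)) : (S ∩ K).Finite := by
  by_contra hinf
  obtain ⟨c, hcK, hc⟩ := Set.Infinite.exists_accPt_of_subset_isCompact hinf hK inter_subset_right
  exact h c hcK (hc.mono (principal_mono.2 inter_subset_left))

theorem IsGap.connectedComponentIn_eq {α : Type*} [ConditionallyCompleteLinearOrder α]
    [TopologicalSpace α] [OrderTopology α] [DenselyOrdered α] {S U : Set α} {a b w : α}
    (h : IsGap S a b) (hw : w ∈ Ioo a b) (hU : Ioo a b ⊆ U) :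
    connectedComponentIn (U \ S) w = Ioo a b := by
  have hsub : Ioo a b ⊆ U \ S := fun u hu => ⟨hU hu, disjoint_left.mp h.2.2.2 hu⟩
  refine Subset.antisymm (fun u hu => ?_) (isPreconnected_Ioo.subset_connectedComponentIn hw hsub)
  have hC := isPreconnected_connectedComponentIn (F := U \ S) (x := w)
  have hwC := mem_connectedComponentIn (hsub hw)
  by_contra hu'
  rcases not_and_or.mp hu' with hau | hub
  · exact (connectedComponentIn_subset _ _ (hC.Icc_subset hu hwC ⟨not_lt.mp hau, hw.1.le⟩)).2 h.1
  · exact (connectedComponentIn_subset _ _ (hC.Icc_subset hwC hu ⟨hw.2.le, not_lt.mp hub⟩)).2 h.2.1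

theorem exists_isGap_mem_Ioo_of_accPt {α : Type*} [LinearOrder α] [TopologicalSpace α]
    [OrderTopology α] [CompactIccSpace α] {S : Set α} {p q : α} (hS : S ⊆ Ioo p q)
    (hp : AccPt p (𝓟 S)) (hq : AccPt q (𝓟 S)) (hdiscrete : ∀ c ∈ Ioo p q, ¬AccPt c (𝓟 S))
    {w : α} (hw : w ∈ Ioo p q) (hwS : w ∉ S) : ∃ a b, IsGap S a b ∧ w ∈ Ioo a b := by
  obtain ⟨s₀, hs₀, hs₀w⟩ := hp.exists_mem_lt hw.1
  obtain ⟨s₁, hs₁, hws₁⟩ := hq.exists_mem_gt hw.2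
  refine exists_isGap_mem_Ioo hs₀ hs₁ ⟨hs₀w, hws₁⟩ hwS
    (isCompact_Icc.finite_inter_of_forall_not_accPt fun c hc => hdiscrete c ?_)
  exact ⟨(hS hs₀).1.trans_le hc.1, hc.2.trans_lt (hS hs₁).2⟩

theorem Ioo_subset_openI (p q : unitInterval) : Ioo p q ⊆ openI :=
  fun _ ht => ⟨p.2.1.trans_lt (Subtype.coe_lt_coe.mpr ht.1),
    (Subtype.coe_lt_coe.mpr ht.2).trans_le q.2.2⟩

theorem apply_eq_of_accPt_fixedPoints {g : IntervalHomeo} {F : ℝ → ℝ}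
    (hF : AnalyticOnNhd ℝ F (Ioo 0 1))
    (hgF : ∀ x : unitInterval, (x : ℝ) ∈ Ioo (0 : ℝ) 1 → ((g x : unitInterval) : ℝ) = F x)
    {T : Set unitInterval} (hT : T ⊆ openI) (hfix : ∀ t ∈ T, g t = t) {r : unitInterval}
    (hr : r ∈ openI) (hacc : AccPt r (𝓟 T)) {u : unitInterval} (hu : u ∈ openI) : g u = u := by
  have hfreq : ∃ᶠ y in 𝓝[≠] (r : ℝ), F y = id y := by
    have := hacc.map continuous_subtype_val.continuousAt Subtype.val_injective
    rw [map_principal, accPt_iff_frequently_nhdsNE] at this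
    refine this.mono ?_
    rintro _ ⟨t, ht, rfl⟩
    rw [← hgF t (hT ht), hfix t ht, id]
  exact Subtype.ext ((hgF u hu).trans
    (hF.eqOn_of_preconnected_of_frequently_eq analyticOnNhd_id isPreconnected_Ioo hr hfreq hu))

theorem apply_eq_of_apply_eq_of_accPt {g : IntervalHomeo} {F : ℝ → ℝ}
    (hF : AnalyticOnNhd ℝ F (Ioo 0 1))
    (hgF : ∀ x : unitInterval, (x : ℝ) ∈ Ioo (0 : ℝ) 1 → ((g x : unitInterval) : ℝ) = F x)
    {S : Set unitInterval} (hS : MapsTo g S S) (hS' : MapsTo g.symm S S) {p q : unitInterval}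
    (hp : p ∈ openI) (hSpq : S ⊆ Ioo p q) (hacc : AccPt p (𝓟 S))
    (hdiscrete : ∀ c ∈ Ioo p q, ¬AccPt c (𝓟 S)) {t : unitInterval} (ht : t ∈ Ioo p q)
    (hgt : g t = t) {u : unitInterval} (hu : u ∈ openI) : g u = u := by
  have hfix : ∀ s ∈ S, g s = s := fun s hs =>
    g.apply_eq_of_finite_inter_uIcc hS hS' hs hgt (isCompact_uIcc.finite_inter_of_forall_not_accPt
      fun c hc => hdiscrete c (ordConnected_Ioo.uIcc_subset (hSpq hs) ht hc))
  exact apply_eq_of_accPt_fixedPoints hF hgF (hSpq.trans (Ioo_subset_openI p q)) hfix hp hacc hu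

section Orbit

variable {G : Subgroup IntervalHomeo}

theorem orbit_mono {H : Subgroup IntervalHomeo} (hGH : G ≤ H) (x : unitInterval) :
    orbit G x ⊆ orbit H x :=
  fun _ ⟨g, hg, hgx⟩ => ⟨g, hGH hg, hgx⟩

theorem mapsTo_orbit {g : IntervalHomeo} (hg : g ∈ G) (x : unitInterval) :
    MapsTo g (orbit G x) (orbit G x) :=
  fun _ ⟨k, hk, hkx⟩ => ⟨g * k, G.mul_mem hg hk, hkx ▸ rfl⟩

theorem image_orbit {g : IntervalHomeo} (hg : g ∈ G) (x : unitInterval) :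
    g '' orbit G x = orbit G x := by
  refine (mapsTo_orbit hg x).image_subset.antisymm fun u hu => ⟨g⁻¹ u, ?_, g.apply_symm_apply u⟩
  exact mapsTo_orbit (G.inv_mem hg) x hu

def gapStabilizer (G : Subgroup IntervalHomeo) (p q : unitInterval) : Subgroup IntervalHomeo :=
  G ⊓ MulAction.stabilizer IntervalHomeo p ⊓ MulAction.stabilizer IntervalHomeo q

theorem mem_gapStabilizer {p q : unitInterval} {g : IntervalHomeo} :
    g ∈ gapStabilizer G p q ↔ g ∈ G ∧ g p = p ∧ g q = q := by
  simp [gapStabilizer, MulAction.mem_stabilizer_iff, and_assoc]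

theorem gapStabilizer_le (p q : unitInterval) : gapStabilizer G p q ≤ G :=
  fun _ hg => (mem_gapStabilizer.mp hg).1

theorem mapsTo_Ioo_of_mem_gapStabilizer {p q : unitInterval} {g : IntervalHomeo}
    (hg : g ∈ gapStabilizer G p q) : MapsTo g (Ioo p q) (Ioo p q) := by
  obtain ⟨-, hgp, hgq⟩ := mem_gapStabilizer.mp hg
  intro t ht
  rw [← hgp, ← hgq]
  exact ⟨g.strictMono ht.1, g.strictMono ht.2⟩

/-- An element of `G` moving a point of the gap into the gap maps the gap onto a gap of `Λ`
meeting it, so it fixes `p` and `q`. -/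
theorem orbit_inter_Ioo_eq_orbit_gapStabilizer {Λ : Set unitInterval}
    (hΛ : ∀ g ∈ G, MapsTo g Λ Λ) {p q : unitInterval} (hp : p ∈ Λ) (hq : q ∈ Λ)
    (hgap : Disjoint (Ioo p q) Λ) {y : unitInterval} (hy : y ∈ Ioo p q) :
    orbit G y ∩ Ioo p q = orbit (gapStabilizer G p q) y := by
  refine Subset.antisymm ?_ fun u hu =>
    ⟨orbit_mono (gapStabilizer_le p q) y hu, ?_⟩
  · rintro _ ⟨⟨g, hg, rfl⟩, hgy⟩
    have := g.apply_eq_of_disjoint (hΛ g hg) (hΛ g⁻¹ (G.inv_mem hg)) hp hq hgap hy hgy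
    exact ⟨g, mem_gapStabilizer.mpr ⟨hg, this⟩, rfl⟩
  · obtain ⟨g, hg, rfl⟩ := hu
    exact mapsTo_Ioo_of_mem_gapStabilizer hg hy

end Orbit

section Parallel

variable {H : Subgroup IntervalHomeo} {x y a b : unitInterval}

theorem IsGap.exists_mem_orbit_inter_Ioo {c d : unitInterval} (hab : IsGap (orbit H x) a b)
    (hcd : IsGap (orbit H x) c d) (hy : y ∈ Ioo c d) : (orbit H y ∩ Ioo a b).Nonempty := by
  obtain ⟨k₁, hk₁, rfl⟩ := hab.1
  obtain ⟨k₂, hk₂, rfl⟩ := hcd.1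
  have hk : k₁ * k₂⁻¹ ∈ H := H.mul_mem hk₁ (H.inv_mem hk₂)
  have hkc : (k₁ * k₂⁻¹) (k₂ x) = k₁ x := by simp [RelIso.mul_apply]
  have himage := hcd.image _ (image_orbit hk x)
  rw [hkc] at himage
  have hkd : (k₁ * k₂⁻¹) d = b := himage.right_eq hab
  refine ⟨(k₁ * k₂⁻¹) y, ⟨_, hk, rfl⟩, ?_⟩
  rw [← hkc, ← hkd]
  exact ⟨(k₁ * k₂⁻¹).strictMono hy.1, (k₁ * k₂⁻¹).strictMono hy.2⟩

theorem IsGap.orbit_inter_Ioo_subsingleton {I : Set unitInterval} (hI : ∀ h ∈ H, MapsTo h I I)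
    (hfree : ∀ h ∈ H, ∀ t ∈ I, h t = t → ∀ u ∈ I, h u = u) (hx : x ∈ I) (hy : y ∈ I)
    (hab : IsGap (orbit H x) a b) : (orbit H y ∩ Ioo a b).Subsingleton := by
  rintro _ ⟨⟨k₁, hk₁, rfl⟩, hu₁⟩ _ ⟨⟨k₂, hk₂, rfl⟩, hu₂⟩
  have hm : k₂ * k₁⁻¹ ∈ H := H.mul_mem hk₂ (H.inv_mem hk₁)
  have hmu : (k₂ * k₁⁻¹) (k₁ y) = k₂ y := by simp [RelIso.mul_apply]
  have hma : a = (k₂ * k₁⁻¹) a := hab.left_eq (hab.image _ (image_orbit hm x)) hu₂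
    (hmu ▸ ⟨(k₂ * k₁⁻¹).strictMono hu₁.1, (k₂ * k₁⁻¹).strictMono hu₁.2⟩)
  have haI : a ∈ I := by
    obtain ⟨k, hk, hka⟩ := hab.1
    exact hka ▸ hI k hk hx
  exact (hfree _ hm a haI hma.symm (k₁ y) (hI k₁ hk₁ hy)).symm.trans hmu

theorem IsGap.exists_orbit_inter_Ioo_eq_singleton {I : Set unitInterval} {c d : unitInterval}
    (hI : ∀ h ∈ H, MapsTo h I I) (hfree : ∀ h ∈ H, ∀ t ∈ I, h t = t → ∀ u ∈ I, h u = u)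
    (hx : x ∈ I) (hy : y ∈ I) (hab : IsGap (orbit H x) a b) (hcd : IsGap (orbit H x) c d)
    (hycd : y ∈ Ioo c d) : ∃ w, orbit H y ∩ Ioo a b = {w} := by
  obtain ⟨w, hw⟩ := hab.exists_mem_orbit_inter_Ioo hcd hycd
  exact ⟨w, (hab.orbit_inter_Ioo_subsingleton hI hfree hx hy).eq_singleton_of_mem hw⟩

end Parallel

theorem stmt18_general (G : Subgroup IntervalHomeo)
    (han : ∀ g ∈ G, ∃ F : ℝ → ℝ, AnalyticOnNhd ℝ F (Set.Ioo (0 : ℝ) 1) ∧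
      ∀ x : unitInterval, (x : ℝ) ∈ Set.Ioo (0 : ℝ) 1 → ((g x : unitInterval) : ℝ) = F (x : ℝ))
    (z : unitInterval)
    (p q : unitInterval) (hp : p ∈ openI)
    (hIdisj : Set.Ioo p q ∩ closure (orbit G z) = ∅)
    (hpz : p ∈ closure (orbit G z)) (hqz : q ∈ closure (orbit G z))
    (x : unitInterval) (hx : x ∈ Set.Ioo p q)
    (hxacc : {w | AccPt w (𝓟 (orbit G x ∩ Set.Ioo p q))} = {p, q}) :
    ∀ y ∈ Set.Ioo p q, y ∉ orbit G x →
      ∀ J : Set unitInterval,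
        (∃ w ∈ Set.Ioo p q \ orbit G x,
          J = connectedComponentIn (Set.Ioo p q \ orbit G x) w) →
        ∃ w, orbit G y ∩ J = {w} := by
  rintro y hy hyx J ⟨w, ⟨hw, hwx⟩, rfl⟩
  set H := gapStabilizer G p q
  have horbit : ∀ {v}, v ∈ Ioo p q → orbit G v ∩ Ioo p q = orbit H v :=
    orbit_inter_Ioo_eq_orbit_gapStabilizer (fun g hg => (mapsTo_orbit hg z).closure g.continuous)
      hpz hqz (disjoint_iff_inter_eq_empty.mpr hIdisj)
  have hS : orbit H x ⊆ Ioo p q := horbit hx ▸ inter_subset_right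
  have hnotMem : ∀ {v}, v ∉ orbit G x → v ∉ orbit H x :=
    fun hv h => hv (orbit_mono (gapStabilizer_le p q) x h)
  rw [horbit hx] at hxacc
  have hacc := Set.ext_iff.mp hxacc
  have hpacc : AccPt p (𝓟 (orbit H x)) := (hacc p).mpr (.inl rfl)
  have hqacc : AccPt q (𝓟 (orbit H x)) := (hacc q).mpr (.inr rfl)
  have hdiscrete : ∀ c ∈ Ioo p q, ¬AccPt c (𝓟 (orbit H x)) :=
    fun c hc h => ((hacc c).mp h).elim hc.1.ne' hc.2.ne
  have hfree : ∀ h ∈ H, ∀ t ∈ Ioo p q, h t = t → ∀ u ∈ Ioo p q, h u = u := by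
    intro h hh t ht hht u hu
    obtain ⟨F, hF, hhF⟩ := han h (gapStabilizer_le p q hh)
    exact apply_eq_of_apply_eq_of_accPt hF hhF (mapsTo_orbit hh x)
      (mapsTo_orbit (H.inv_mem hh) x) hp hS hpacc hdiscrete ht hht (Ioo_subset_openI p q hu)
  obtain ⟨a, b, hab, hwab⟩ :=
    exists_isGap_mem_Ioo_of_accPt hS hpacc hqacc hdiscrete hw (hnotMem hwx)
  obtain ⟨c, d, hcd, hycd⟩ :=
    exists_isGap_mem_Ioo_of_accPt hS hpacc hqacc hdiscrete hy (hnotMem hyx)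
  have hsub : Ioo a b ⊆ Ioo p q :=
    Ioo_subset_Icc_self.trans (ordConnected_Ioo.out (hS hab.1) (hS hab.2.1))
  rw [← sdiff_inter_self_eq_sdiff, horbit hx, hab.connectedComponentIn_eq hwab hsub,
    ← inter_eq_right.mpr hsub, ← inter_assoc, horbit hy]
  exact hab.exists_orbit_inter_Ioo_eq_singleton (fun _ => mapsTo_Ioo_of_mem_gapStabilizer) hfree
    hx hy hcd hycd

/-- Let `G` be finitely generated, each element real-analytic on `(0,1)`,
with no global fixed point in `(0,1)`. Let `I₀ = (p,q)` be a connected component of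
`(0,1) ∖ closure (O(z))` with `p, q ∈ (0,1)`, and suppose `x ∈ I₀` is such that
`O(x) ∩ I₀` is infinite with accumulation set exactly `{p, q}`. Then for every
`y ∈ I₀ ∖ O(x)` and every connected component `J` of `I₀ ∖ O(x)`, the set `O(y) ∩ J` is a
single point: every orbit meeting `I₀` other than `O(x)` is parallel to `O(x)` in `I₀`. -/
theorem stmt18 (G : Subgroup IntervalHomeo) (hfg : G.FG)
    (han : ∀ g ∈ G, ∃ F : ℝ → ℝ, AnalyticOnNhd ℝ F (Set.Ioo (0 : ℝ) 1) ∧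
      ∀ x : unitInterval, (x : ℝ) ∈ Set.Ioo (0 : ℝ) 1 → ((g x : unitInterval) : ℝ) = F (x : ℝ))
    (hnofix : ∀ x ∈ openI, ∃ g ∈ G, g x ≠ x)
    (z : unitInterval) (hz : z ∈ openI)
    (p q : unitInterval) (hp : p ∈ openI) (hq : q ∈ openI) (hpq : p < q)
    (hIdisj : Set.Ioo p q ∩ closure (orbit G z) = ∅)
    (hpz : p ∈ closure (orbit G z)) (hqz : q ∈ closure (orbit G z))
    (x : unitInterval) (hx : x ∈ Set.Ioo p q)
    (hxinf : (orbit G x ∩ Set.Ioo p q).Infinite)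
    (hxacc : {w | AccPt w (𝓟 (orbit G x ∩ Set.Ioo p q))} = {p, q}) :
    ∀ y ∈ Set.Ioo p q, y ∉ orbit G x →
      ∀ J : Set unitInterval,
        (∃ w ∈ Set.Ioo p q \ orbit G x,
          J = connectedComponentIn (Set.Ioo p q \ orbit G x) w) →
        ∃ w, orbit G y ∩ J = {w} :=
  stmt18_general G han z p q hp hIdisj hpz hqz x hx hxacc
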